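/- arXiv:1911.10488 — 4 statements merged into one kernel-verified Lean document; each statement's English description precedes it below -/
import Mathlib

section
/- Let λ, f > 0 and define the quasienergies ε₁ = -(2√(f²+λ²)+λ)/4, ε₂ = (λ-2f)/4, ε₃ = (2√(f²+λ²)-λ)/4, ε₄ = (λ+2f)/4. Then: (a) ε₂ - ε₁ = 1 if and only if f·(2-λ) = 2(λ-1); (b) ε₃ - ε₂ = 1 if and only if f·(2+λ) = 2(λ+1); (c) ε₄ - ε₂ = 1 if and only if f = 1. -/
open Real

/-- the phase boundary equations of the two-spin Rabi model:
(a) ε₂ - ε₁ = 1 ↔ f(2-λ) = 2(λ-1);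
(b) ε₃ - ε₂ = 1 ↔ f(2+λ) = 2(λ+1);
(c) ε₄ - ε₂ = 1 ↔ f = 1. -/
theorem two_spin_Rabi_phase_boundaries (l f : ℝ) (hl : 0 < l) (hf : 0 < f) :
    ((l - 2*f)/4 - (-(2 * Real.sqrt (f^2 + l^2) + l)/4) = 1 ↔ f * (2 - l) = 2 * (l - 1)) ∧
    ((2 * Real.sqrt (f^2 + l^2) - l)/4 - (l - 2*f)/4 = 1 ↔ f * (2 + l) = 2 * (l + 1)) ∧
    ((l + 2*f)/4 - (l - 2*f)/4 = 1 ↔ f = 1) := by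
  have hnn : (0:ℝ) ≤ f^2 + l^2 := by positivity
  have hsq : Real.sqrt (f^2 + l^2) ^ 2 = f^2 + l^2 := Real.sq_sqrt hnn
  refine ⟨⟨fun h => ?_, fun h => ?_⟩, ⟨fun h => ?_, fun h => ?_⟩, ⟨fun h => ?_, fun h => ?_⟩⟩
  · have hs : Real.sqrt (f^2 + l^2) = 2 - l + f := by linarith
    rw [hs] at hsq
    nlinarith
  · have hl2 : l < 2 := by nlinarith
    have hpos : (0:ℝ) ≤ 2 - l + f := by linarith
    have heq : f^2 + l^2 = (2 - l + f)^2 := by nlinarith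
    have hs : Real.sqrt (f^2 + l^2) = 2 - l + f := by
      rw [heq, Real.sqrt_sq hpos]
    linarith
  · have hs : Real.sqrt (f^2 + l^2) = 2 + l - f := by linarith
    rw [hs] at hsq
    nlinarith
  · have hf2 : f < 2 := by nlinarith
    have hpos : (0:ℝ) ≤ 2 + l - f := by linarith
    have heq : f^2 + l^2 = (2 + l - f)^2 := by nlinarith
    have hs : Real.sqrt (f^2 + l^2) = 2 + l - f := by
      rw [heq, Real.sqrt_sq hpos]
    linarith
  · linarith
  · linarith
end

section
/- Let 0 < λ < 2 and f > 0 and define the quasienergies ε₁ = -(2√(f²+λ²)+λ)/4 and ε₄ = (λ+2f)/4. Then ε₄ - ε₁ = 1 if and only if f·(λ-2) = 2(λ-1) (equivalently f = 2(1-λ)/(2-λ), which requires 0 < λ < 1). -/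
open Real

/-- for 0 < λ < 2 and f > 0, the phase boundary ε₄ - ε₁ = 1 is equivalent
to f·(λ-2) = 2(λ-1). -/
theorem two_spin_Rabi_phase_boundary_41 (l f : ℝ) (hl : 0 < l) (hl2 : l < 2) (hf : 0 < f) :
    (l + 2*f)/4 - (-(2 * Real.sqrt (f^2 + l^2) + l)/4) = 1 ↔ f * (l - 2) = 2 * (l - 1) := by
  constructor
  · intro h
    have hs : Real.sqrt (f^2 + l^2) = 2 - l - f := by linarith
    have h2 : Real.sqrt (f^2 + l^2) ^ 2 = f^2 + l^2 :=
      Real.sq_sqrt (by positivity)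
    rw [hs] at h2
    nlinarith
  · intro h
    have hpos : 0 < 2 - l - f := by nlinarith
    have hs : Real.sqrt (f^2 + l^2) = 2 - l - f := by
      rw [show f^2 + l^2 = (2 - l - f)^2 by nlinarith]
      exact Real.sqrt_sq hpos.le
    linarith
end

section
/- Let N ≥ 1 and let H : ℝ → M_N(ℂ) be a continuous family of Hermitean N×N matrices that is 2π-periodic (H(t+2π) = H(t) for all t) and satisfies the reality condition that the entrywise complex conjugate of H(t) equals H(-t) for all t ∈ ℝ. Let U : ℝ → M_N(ℂ) be the solution of the differential equation dU/dt = -i·H(t)·U(t) with U(0) = 1. Then the monodromy matrix U(2π) is symmetric: U(2π)ᵀ = U(2π). -/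
open Matrix Real Complex

private lemma matConst {n : ℕ} (F : ℝ → Matrix (Fin n) (Fin n) ℂ)
    (h : ∀ (t : ℝ) (i j : Fin n), HasDerivAt (fun s : ℝ => F s i j) 0 t)
    (a b : ℝ) : F a = F b := by
  ext i j
  exact is_const_of_deriv_eq_zero (fun t => (h t i j).differentiableAt)
    (fun t => (h t i j).deriv) a b

private lemma matProdDeriv {n : ℕ} {f g f' g' : ℝ → Matrix (Fin n) (Fin n) ℂ}
    (hf : ∀ (t : ℝ) (i j : Fin n), HasDerivAt (fun s : ℝ => f s i j) (f' t i j) t)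
    (hg : ∀ (t : ℝ) (i j : Fin n), HasDerivAt (fun s : ℝ => g s i j) (g' t i j) t)
    (t : ℝ) (i j : Fin n) :
    HasDerivAt (fun s : ℝ => (f s * g s) i j) ((f' t * g t + f t * g' t) i j) t := by
  have key : (fun s : ℝ => (f s * g s) i j) = fun s : ℝ => ∑ k, f s i k * g s k j := by
    funext s; rw [Matrix.mul_apply]
  have val : (f' t * g t + f t * g' t) i j
      = ∑ k, (f' t i k * g t k j + f t i k * g' t k j) := by
    simp [Matrix.mul_apply, Matrix.add_apply, Finset.sum_add_distrib]
  rw [key, val]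
  exact HasDerivAt.fun_sum fun k _ => (hf t i k).mul (hg t k j)

/-- if H : ℝ → M_N(ℂ) is a continuous, 2π-periodic, Hermitean family with
conj(H(t)) = H(-t) for all t, and U solves dU/dt = -i·H(t)·U(t) with U(0) = 1, then the
monodromy matrix U(2π) is symmetric. -/
theorem monodromy_symmetric (N : ℕ) (hN : 1 ≤ N)
    (H : ℝ → Matrix (Fin N) (Fin N) ℂ)
    (hcont : Continuous H)
    (hherm : ∀ t : ℝ, (H t)ᴴ = H t)
    (hper : ∀ t : ℝ, H (t + 2 * Real.pi) = H t)
    (hreal : ∀ t : ℝ, (H t).map (starRingEnd ℂ) = H (-t))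
    (U : ℝ → Matrix (Fin N) (Fin N) ℂ)
    (hU : ∀ t : ℝ, ∀ i j : Fin N,
      HasDerivAt (fun s : ℝ => U s i j) (((-Complex.I) • (H t * U t)) i j) t)
    (hU0 : U 0 = 1) :
    (U (2 * Real.pi))ᵀ = U (2 * Real.pi) := by
  -- entrywise facts about H
  have hHs : ∀ (t : ℝ) (i j : Fin N), star (H t i j) = H t j i := by
    intro t i j
    conv_rhs => rw [← hherm t]
    simp [Matrix.conjTranspose_apply]
  have hHtrans : ∀ t : ℝ, (H (-t))ᵀ = H t := by
    intro t
    ext i j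
    have : H (-t) j i = star (H t j i) := by rw [← hreal t]; rfl
    rw [Matrix.transpose_apply, this, hHs]
  have hper' : ∀ t : ℝ, H (t - 2 * Real.pi) = H t := by
    intro t
    have h2 := hper (t - 2 * Real.pi)
    rw [sub_add_cancel] at h2
    exact h2.symm
  -- derivative of entries of Uᴴ
  have hUH : ∀ (t : ℝ) (i j : Fin N),
      HasDerivAt (fun s : ℝ => (U s)ᴴ i j) ((Complex.I • ((U t)ᴴ * H t)) i j) t := by
    intro t i j
    have h := (hU t j i).star
    have val : star (((-Complex.I) • (H t * U t)) j i) = (Complex.I • ((U t)ᴴ * H t)) i j := by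
      simp only [Matrix.smul_apply, Matrix.mul_apply, Matrix.conjTranspose_apply,
        smul_eq_mul, star_mul', star_sum, star_neg, Complex.star_def, Complex.conj_I,
        map_sum, _root_.map_mul, neg_mul, neg_neg, Finset.mul_sum]
      refine Finset.sum_congr rfl fun k _ => ?_
      have := hHs t j k
      rw [Complex.star_def] at this
      rw [this]; ring
    rw [val] at h
    exact h
  -- derivative of entries of t ↦ U (-t)
  have hUneg : ∀ (t : ℝ) (i j : Fin N),
      HasDerivAt (fun s : ℝ => U (-s) i j) ((Complex.I • (H (-t) * U (-t))) i j) t := by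
    intro t i j
    have h : HasDerivAt (fun s : ℝ => U (-s) i j)
        ((-1 : ℝ) • (((-Complex.I) • (H (-t) * U (-t))) i j)) t :=
      HasDerivAt.scomp_of_eq t (hU (-t) i j) (hasDerivAt_neg t) rfl
    have val : (-1 : ℝ) • (((-Complex.I) • (H (-t) * U (-t))) i j)
        = (Complex.I • (H (-t) * U (-t))) i j := by
      simp [Matrix.smul_apply]
    rw [val] at h
    exact h
  -- entries of transpose of U(-t)
  have hUnegT : ∀ (t : ℝ) (i j : Fin N),
      HasDerivAt (fun s : ℝ => (U (-s))ᵀ i j) ((Complex.I • ((U (-t))ᵀ * H t)) i j) t := by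
    intro t i j
    have h := hUneg t j i
    have val : (Complex.I • (H (-t) * U (-t))) j i = (Complex.I • ((U (-t))ᵀ * H t)) i j := by
      simp only [Matrix.smul_apply, Matrix.mul_apply, smul_eq_mul, Matrix.transpose_apply,
        Finset.mul_sum]
      refine Finset.sum_congr rfl fun k _ => ?_
      have : H (-t) j k = H t k j := by
        rw [← hHtrans t]; rfl
      rw [this]; ring
    rw [val] at h
    exact h
  -- derivative of entries of t ↦ U (t - 2π)
  have hUsh : ∀ (t : ℝ) (i j : Fin N),
      HasDerivAt (fun s : ℝ => U (s - 2 * Real.pi) i j)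
        (((-Complex.I) • (H t * U (t - 2 * Real.pi))) i j) t := by
    intro t i j
    have h : HasDerivAt (fun s : ℝ => U (s - 2 * Real.pi) i j)
        ((1 : ℝ) • (((-Complex.I) • (H (t - 2 * Real.pi) * U (t - 2 * Real.pi))) i j)) t :=
      HasDerivAt.scomp_of_eq t (hU (t - 2 * Real.pi) i j)
        ((hasDerivAt_id t).sub_const (2 * Real.pi)) rfl
    simpa [hper' t] using h
  -- (1) unitarity
  have hM1 : ∀ (t : ℝ) (i j : Fin N),
      HasDerivAt (fun s : ℝ => ((U s)ᴴ * U s) i j) 0 t := by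
    intro t i j
    have h := matProdDeriv hUH (fun t i j => hU t i j) t i j
    have z : Complex.I • ((U t)ᴴ * H t) * U t + (U t)ᴴ * ((-Complex.I) • (H t * U t)) = 0 := by
      simp [Matrix.smul_mul, Matrix.mul_smul, Matrix.mul_assoc, neg_smul]
    rw [z] at h
    simpa using h
  have unit1 : (U (2 * Real.pi))ᴴ * U (2 * Real.pi) = 1 := by
    have h := matConst _ hM1 (2 * Real.pi) 0
    rw [h, hU0]
    simp
  -- (2) shift relation
  have hM2 : ∀ (t : ℝ) (i j : Fin N),
      HasDerivAt (fun s : ℝ => ((U s)ᴴ * U (s - 2 * Real.pi)) i j) 0 t := by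
    intro t i j
    have h := matProdDeriv hUH hUsh t i j
    have z : Complex.I • ((U t)ᴴ * H t) * U (t - 2 * Real.pi)
        + (U t)ᴴ * ((-Complex.I) • (H t * U (t - 2 * Real.pi))) = 0 := by
      simp [Matrix.smul_mul, Matrix.mul_smul, Matrix.mul_assoc, neg_smul]
    rw [z] at h
    simpa using h
  have shift : (U (2 * Real.pi))ᴴ = U (-(2 * Real.pi)) := by
    have h := matConst _ hM2 (2 * Real.pi) 0
    rw [sub_self, hU0, zero_sub, mul_one] at h
    rw [h]
    simp [hU0]
  -- (3) reality relation
  have hM3 : ∀ (t : ℝ) (i j : Fin N),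
      HasDerivAt (fun s : ℝ => ((U (-s))ᵀ * U s) i j) 0 t := by
    intro t i j
    have h := matProdDeriv hUnegT (fun t i j => hU t i j) t i j
    have z : Complex.I • ((U (-t))ᵀ * H t) * U t + (U (-t))ᵀ * ((-Complex.I) • (H t * U t)) = 0 := by
      simp [Matrix.smul_mul, Matrix.mul_smul, Matrix.mul_assoc, neg_smul]
    rw [z] at h
    simpa using h
  have real1 : (U (-(2 * Real.pi)))ᵀ * U (2 * Real.pi) = 1 := by
    have h := matConst _ hM3 (2 * Real.pi) 0
    rw [h, neg_zero, hU0]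
    simp
  -- combine
  set X := U (2 * Real.pi) with hX
  have h3 : ((X)ᴴ)ᵀ * X = 1 := by rw [shift]; exact real1
  have h4 : X * Xᴴ = 1 := mul_eq_one_comm.mp unit1
  have h5 : (Xᴴ)ᵀ = Xᴴ := by
    calc (Xᴴ)ᵀ = (Xᴴ)ᵀ * (X * Xᴴ) := by rw [h4, mul_one]
    _ = ((Xᴴ)ᵀ * X) * Xᴴ := by rw [mul_assoc]
    _ = Xᴴ := by rw [h3, one_mul]
  ext i j
  have h6 := congrFun (congrFun h5 i) j
  simp only [Matrix.transpose_apply, Matrix.conjTranspose_apply] at h6 ⊢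
  have h7 := congrArg star h6
  simpa using h7.symm
end

section
/- Let λ = f > 0 and let Ψ(t) = P(t)·A·Δ(t)·Aᵀ be the time-evolution matrix of the two-spin Rabi model. Then the excitation probability from the ground state (energy E₃ = -3λ/4, projector P₃) to the state with energy E₂ = λ/4 - 1 (projector P₂) satisfies, for all t ∈ ℝ, Tr( P₂ · Ψ(t) · P₃ · Ψ(t)* ) = (1/4)·sin²( f·t / √2 ). -/
open Matrix Complex Real

noncomputable def Ham (l f t : ℝ) : Matrix (Fin 4) (Fin 4) ℂ :=
  !![(((l+4)/4 : ℝ) : ℂ), 0, ((f/2 : ℝ) : ℂ) * Complex.exp (-Complex.I * t), 0;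
     0, ((-(l/4) : ℝ) : ℂ), ((l/2 : ℝ) : ℂ), ((f/2 : ℝ) : ℂ) * Complex.exp (-Complex.I * t);
     ((f/2 : ℝ) : ℂ) * Complex.exp (Complex.I * t), ((l/2 : ℝ) : ℂ), ((-(l/4) : ℝ) : ℂ), 0;
     0, ((f/2 : ℝ) : ℂ) * Complex.exp (Complex.I * t), 0, (((l-4)/4 : ℝ) : ℂ)]

noncomputable def Pmat (t : ℝ) : Matrix (Fin 4) (Fin 4) ℂ :=
  !![Complex.exp (-Complex.I * t), 0, 0, 0;
     0, 1, 0, 0;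
     0, 0, 1, 0;
     0, 0, 0, Complex.exp (Complex.I * t)]

noncomputable def Amat (l f : ℝ) : Matrix (Fin 4) (Fin 4) ℝ :=
  let α := l / Real.sqrt (f^2 + l^2)
  (1/2 : ℝ) • !![-Real.sqrt (1-α), 1, Real.sqrt (1+α), 1;
                 -Real.sqrt (1+α), -1, -Real.sqrt (1-α), 1;
                 Real.sqrt (1+α), -1, Real.sqrt (1-α), 1;
                 Real.sqrt (1-α), 1, -Real.sqrt (1+α), 1]

noncomputable def AmatC (l f : ℝ) : Matrix (Fin 4) (Fin 4) ℂ :=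
  (Amat l f).map Complex.ofReal

noncomputable def Dmat (l f t : ℝ) : Matrix (Fin 4) (Fin 4) ℂ :=
  Matrix.diagonal
    ![Complex.exp (Complex.I * t * (((2 * Real.sqrt (f^2 + l^2) + l)/4 : ℝ) : ℂ)),
      Complex.exp (Complex.I * t * (((2*f - l)/4 : ℝ) : ℂ)),
      Complex.exp (Complex.I * t * (((l - 2 * Real.sqrt (f^2 + l^2))/4 : ℝ) : ℂ)),
      Complex.exp (-Complex.I * t * (((2*f + l)/4 : ℝ) : ℂ))]

noncomputable def Psi (l f t : ℝ) : Matrix (Fin 4) (Fin 4) ℂ :=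
  Pmat t * AmatC l f * Dmat l f t * (AmatC l f)ᵀ

/-- The projectors P₁, P₂, P₃, P₄ onto the eigenstates of the static Hamiltonian H₀. -/
noncomputable def Proj : Fin 4 → Matrix (Fin 4) (Fin 4) ℂ :=
  ![!![1,0,0,0; 0,0,0,0; 0,0,0,0; 0,0,0,0],
    !![0,0,0,0; 0,0,0,0; 0,0,0,0; 0,0,0,1],
    !![0,0,0,0; 0,1/2,-(1/2),0; 0,-(1/2),1/2,0; 0,0,0,0],
    !![0,0,0,0; 0,1/2,1/2,0; 0,1/2,1/2,0; 0,0,0,0]]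

/-- for λ = f the excitation probability from the ground state (projector P₃)
to the state with energy E₂ (projector P₂) is Tr(P₂·Ψ(t)·P₃·Ψ(t)*) = (1/4)sin²(f·t/√2). -/
theorem two_spin_Rabi_excitation_probability (f : ℝ) (hf : 0 < f) :
    ∀ t : ℝ,
      (Proj 1 * Psi f f t * Proj 2 * (Psi f f t)ᴴ).trace =
        (((1/4) * Real.sin (f * t / Real.sqrt 2)^2 : ℝ) : ℂ) := by

  intro t
  have hs : Real.sqrt (f^2 + f^2) = f * Real.sqrt 2 := by
    rw [show f^2 + f^2 = f^2 * 2 by ring, Real.sqrt_mul (sq_nonneg f), Real.sqrt_sq hf.le]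
  have h2 : Real.sqrt 2 * Real.sqrt 2 = 2 := Real.mul_self_sqrt (by norm_num)
  have hα : f / (f * Real.sqrt 2) = Real.sqrt 2 / 2 := by
    field_simp
    linear_combination (-1) * h2
  have key : Psi f f t 3 1 - Psi f f t 3 2 =
      ((Real.sqrt 2 / 2 : ℝ) : ℂ) / 2 * Complex.exp (Complex.I * t) *
        (Complex.exp (Complex.I * t * (((f - 2 * (f * Real.sqrt 2))/4 : ℝ) : ℂ))
          - Complex.exp (Complex.I * t * (((2 * (f * Real.sqrt 2) + f)/4 : ℝ) : ℂ))) := by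
    simp only [Psi, Pmat, AmatC, Amat, Dmat, Matrix.mul_apply, Fin.sum_univ_four,
      Matrix.diagonal, Matrix.map_apply, Matrix.transpose_apply, Matrix.smul_apply,
      Matrix.cons_val', Matrix.cons_val_zero, Matrix.cons_val_one, Matrix.head_cons,
      Matrix.empty_val', Matrix.cons_val_fin_one, Matrix.head_fin_const,
      Matrix.cons_val_two, Matrix.cons_val_three, Matrix.tail_cons, Matrix.of_apply,
      smul_eq_mul]
    rw [hs, hα]
    push_cast
    ring_nf
    have h1 : (0:ℝ) ≤ 1 + Real.sqrt 2 * (-1/2) := by nlinarith [Real.sqrt_nonneg 2]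
    have hbc : Real.sqrt (1 + Real.sqrt 2 * (-1/2)) * Real.sqrt (1 + Real.sqrt 2 * (1/2)) = Real.sqrt 2 / 2 := by
      rw [← Real.sqrt_mul h1,
        show (1 + Real.sqrt 2*(-1/2))*(1+Real.sqrt 2*(1/2)) = 1 - (Real.sqrt 2*Real.sqrt 2)/4 by ring, h2,
        show (1:ℝ) - 2/4 = (Real.sqrt 2/2)^2 by rw [div_pow, Real.sq_sqrt (by norm_num : (0:ℝ) ≤ 2)]; norm_num,
        Real.sqrt_sq (by positivity)]
    have hbcC : ((Real.sqrt (1 + Real.sqrt 2 * (-1/2)) : ℝ) : ℂ) * ((Real.sqrt (1 + Real.sqrt 2 * (1/2)) : ℝ) : ℂ) = ((Real.sqrt 2 : ℝ) : ℂ) / 2 := by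
      exact_mod_cast congrArg Complex.ofReal hbc
    linear_combination hbcC * (Complex.exp (Complex.I * (t:ℂ)) *
      (Complex.exp (Complex.I * (t:ℂ) * (f:ℂ) * (1/4) + Complex.I * (t:ℂ) * (f:ℂ) * ((Real.sqrt 2:ℝ):ℂ) * (-1/2))
      - Complex.exp (Complex.I * (t:ℂ) * (f:ℂ) * (1/4) + Complex.I * (t:ℂ) * (f:ℂ) * ((Real.sqrt 2:ℝ):ℂ) * (1/2))) / 2)
  have hA : (Proj 1 * Psi f f t * Proj 2 * (Psi f f t)ᴴ).trace
      = (1/2) * (Psi f f t 3 1 - Psi f f t 3 2) *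
        (starRingEnd ℂ) (Psi f f t 3 1 - Psi f f t 3 2) := by
    simp [Matrix.trace, Matrix.mul_apply, Fin.sum_univ_four, Proj, Matrix.conjTranspose_apply,
      Matrix.diag, Matrix.vecMul, dotProduct, map_sub]
    ring
  rw [hA, key]
  have hsin : Real.sin (f*t/Real.sqrt 2)^2 = 1/2 - Real.cos (t*(f*Real.sqrt 2))/2 := by
    rw [Real.sin_sq_eq_half_sub]
    have : 2 * (f*t/Real.sqrt 2) = t*(f*Real.sqrt 2) := by
      field_simp
      linear_combination (-1) * t * h2
    rw [this]
  rw [hsin]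
  push_cast [Complex.ofReal_cos]
  rw [Complex.cos]
  simp only [_root_.map_mul, map_div₀, _root_.map_sub, _root_.map_add, _root_.map_one, map_ofNat, Complex.conj_ofReal,
    ← Complex.exp_conj, Complex.conj_I]
  ring_nf
  have h2C : ((Real.sqrt 2 : ℝ) : ℂ) * ((Real.sqrt 2 : ℝ) : ℂ) = 2 := by
    exact_mod_cast congrArg Complex.ofReal h2
  set s : ℂ := ((Real.sqrt 2 : ℝ) : ℂ) with hsdef
  set X : ℂ := Complex.exp (Complex.I * (t:ℂ)) with hX
  set X' : ℂ := Complex.exp (-(Complex.I * (t:ℂ))) with hX'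
  set Y1 : ℂ := Complex.exp (s * Complex.I * (t:ℂ) * (f:ℂ) * (-1/2) + Complex.I * (t:ℂ) * (f:ℂ) * (1/4)) with hY1
  set Y2 : ℂ := Complex.exp (s * Complex.I * (t:ℂ) * (f:ℂ) * (1/2) + Complex.I * (t:ℂ) * (f:ℂ) * (-1/4)) with hY2
  set Z1 : ℂ := Complex.exp (s * Complex.I * (t:ℂ) * (f:ℂ) * (1/2) + Complex.I * (t:ℂ) * (f:ℂ) * (1/4)) with hZ1
  set Z2 : ℂ := Complex.exp (s * Complex.I * (t:ℂ) * (f:ℂ) * (-1/2) + Complex.I * (t:ℂ) * (f:ℂ) * (-1/4)) with hZ2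
  set W : ℂ := Complex.exp (s * Complex.I * (t:ℂ) * (f:ℂ)) with hW
  set W' : ℂ := Complex.exp (-(s * Complex.I * (t:ℂ) * (f:ℂ))) with hW'
  have T5 : X * X' = 1 := by
    rw [hX, hX', ← Complex.exp_add]; simp
  have T1 : Y1 * Y2 = 1 := by
    rw [hY1, hY2, ← Complex.exp_add,
      show s * Complex.I * (t:ℂ) * (f:ℂ) * (-1/2) + Complex.I * (t:ℂ) * (f:ℂ) * (1/4)
        + (s * Complex.I * (t:ℂ) * (f:ℂ) * (1/2) + Complex.I * (t:ℂ) * (f:ℂ) * (-1/4)) = 0 by ring,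
      Complex.exp_zero]
  have T4 : Z1 * Z2 = 1 := by
    rw [hZ1, hZ2, ← Complex.exp_add,
      show s * Complex.I * (t:ℂ) * (f:ℂ) * (1/2) + Complex.I * (t:ℂ) * (f:ℂ) * (1/4)
        + (s * Complex.I * (t:ℂ) * (f:ℂ) * (-1/2) + Complex.I * (t:ℂ) * (f:ℂ) * (-1/4)) = 0 by ring,
      Complex.exp_zero]
  have T2 : Y1 * Z2 = W' := by
    rw [hY1, hZ2, hW', ← Complex.exp_add]
    congr 1
    ring
  have T3 : Z1 * Y2 = W := by
    rw [hZ1, hY2, hW, ← Complex.exp_add]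
    congr 1
    ring
  linear_combination (1/32) * (X*X') * (Y1*Y2 - Y1*Z2 - Z1*Y2 + Z1*Z2) * h2C
    + (1/16) * (Y1*Y2 - Y1*Z2 - Z1*Y2 + Z1*Z2) * T5
    + (1/16) * (T1 - T2 - T3 + T4)
end
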